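/- arXiv:2208.08286 — 2 statements merged into one kernel-verified Lean document; each statement's English description precedes it below -/
import Mathlib

section
/- Let R be a discrete valuation ring with maximal ideal P = Rp. Then the injective hull E(R/P) of R/P is not a pseudo-absorbing primary multiplication R-module. -/
/-!
Over a domain, an injective module is divisible, so in `E = E(R/P)` the socle `N = (0 :_E p)`
contains `R/P` but is not of the form `I • E`: every nonzero element of `E` is divisible by every
`p * r` with `r ≠ 0`, whence `(N : E) = 0`. The ideal `0` is prime, hence 2-absorbing primary,
so the multiplication property would force `N = 0 • E = 0`.

Because `Module.Injective R E` only tests modules in the universe of `E`, divisibility needs `R`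
to be small there; for a DVR this follows from `R/P ↪ E`, since `R` embeds in `∏ₙ R/Pⁿ` and each
`Pⁿ/Pⁿ⁺¹` is a quotient of `R/P`.
-/

/-- A proper ideal `I` is 2-absorbing primary if `a*b*c ∈ I` implies
`a*b ∈ I` or `a*c ∈ √I` or `b*c ∈ √I`. -/
def IsTwoAbsPrimary {R : Type*} [CommRing R] (I : Ideal R) : Prop :=
  I ≠ ⊤ ∧ ∀ a b c : R, a * b * c ∈ I → a * b ∈ I ∨ a * c ∈ I.radical ∨ b * c ∈ I.radical

/-- A proper submodule `N` of `M` is pseudo-absorbing primary if `(N :_R M)`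
is a 2-absorbing primary ideal of `R`. -/
def IsPseudoAbsPrimary {R M : Type*} [CommRing R] [AddCommGroup M] [Module R M]
    (N : Submodule R M) : Prop :=
  N ≠ ⊤ ∧ IsTwoAbsPrimary (N.colon ⊤)

/-- `M` is a pseudo-absorbing primary multiplication module if every
pseudo-absorbing primary submodule `N` satisfies `N = I • M` for some ideal `I`. -/
def IsPAPMultiplication (R M : Type*) [CommRing R] [AddCommGroup M] [Module R M] : Prop :=
  ∀ N : Submodule R M, IsPseudoAbsPrimary N → ∃ I : Ideal R, N = I • (⊤ : Submodule R M)

universe w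

theorem small_of_surjective_of_small_ker {M N : Type*} [AddGroup M] [AddGroup N] (f : M →+ N)
    (hf : Function.Surjective f) [Small.{w} N] [Small.{w} f.ker] : Small.{w} M := by
  refine small_of_surjective (f := fun q : N × f.ker ↦ Function.surjInv hf q.1 + q.2) fun x ↦ ?_
  refine ⟨(f x, ⟨-Function.surjInv hf (f x) + x, ?_⟩), by simp⟩
  simp [Function.surjInv_eq hf]

theorem small_quotient_span_singleton_pow {R : Type*} [CommRing R] (p : R)
    [Small.{w} (R ⧸ Ideal.span {p})] (n : ℕ) : Small.{w} (R ⧸ Ideal.span {p} ^ n) := by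
  have mem_pow (m : ℕ) (x : R) : x ∈ Ideal.span {p} ^ m ↔ p ^ m ∣ x := by
    rw [Ideal.span_singleton_pow, Ideal.mem_span_singleton]
  induction n with
  | zero =>
    have : Subsingleton (R ⧸ Ideal.span {p} ^ 0) :=
      Ideal.Quotient.subsingleton_iff.mpr (by rw [pow_zero, Ideal.one_eq_top])
    infer_instance
  | succ n ih =>
    -- multiplication by `p ^ n` maps `R ⧸ (p)` onto the kernel of `R ⧸ (p ^ (n + 1)) → R ⧸ (p ^ n)`
    let mulPow : R ⧸ Ideal.span {p} →ₗ[R] R ⧸ Ideal.span {p} ^ (n + 1) :=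
      Submodule.liftQ _ ((Ideal.span {p} ^ (n + 1)).mkQ ∘ₗ LinearMap.mulLeft R (p ^ n))
        fun x hx ↦ by
          obtain ⟨c, rfl⟩ := Ideal.mem_span_singleton'.mp hx
          rw [LinearMap.mem_ker, LinearMap.comp_apply, Submodule.mkQ_apply,
            Submodule.Quotient.mk_eq_zero, mem_pow]
          exact ⟨c, by simp only [LinearMap.mulLeft_apply]; ring⟩
    have hle : Ideal.span {p} ^ (n + 1) ≤ Ideal.span {p} ^ n := Ideal.pow_le_pow_right n.le_succ
    let f := Ideal.Quotient.factor hle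
    have hker : (f.toAddMonoidHom.ker : Set _) ⊆ Set.range mulPow := by
      intro x hx
      obtain ⟨x, rfl⟩ := Ideal.Quotient.mk_surjective x
      obtain ⟨c, rfl⟩ : p ^ n ∣ x := by
        rwa [SetLike.mem_coe, AddMonoidHom.mem_ker, RingHom.toAddMonoidHom_eq_coe,
          AddMonoidHom.coe_coe, Ideal.Quotient.factor_mk, Ideal.Quotient.eq_zero_iff_mem,
          mem_pow] at hx
      exact ⟨Submodule.Quotient.mk c, rfl⟩
    have : Small.{w} f.toAddMonoidHom.ker := small_subset hker
    exact small_of_surjective_of_small_ker f.toAddMonoidHom (Ideal.Quotient.factor_surjective hle)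

theorem small_of_iInf_span_singleton_pow_eq_bot {R : Type*} [CommRing R] {p : R}
    (h : ⨅ n : ℕ, Ideal.span {p} ^ n = ⊥) [Small.{w} (R ⧸ Ideal.span {p})] : Small.{w} R := by
  have := small_quotient_span_singleton_pow.{w} p
  refine small_of_injective (f := fun r (n : ℕ) ↦ Ideal.Quotient.mk (Ideal.span {p} ^ n) r)
    fun r s hrs ↦ ?_
  have : r - s ∈ ⨅ n : ℕ, Ideal.span {p} ^ n :=
    Submodule.mem_iInf _ |>.mpr fun n ↦ Ideal.Quotient.eq.mp (congrFun hrs n)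
  rwa [h, Ideal.mem_bot, sub_eq_zero] at this

theorem IsDiscreteValuationRing.small_of_small_residue {R : Type*} [CommRing R] [IsDomain R]
    [IsDiscreteValuationRing R] [Small.{w} (R ⧸ IsLocalRing.maximalIdeal R)] : Small.{w} R := by
  obtain ⟨p, hp⟩ := exists_irreducible R
  have hP := (irreducible_iff_uniformizer p).mp hp
  have : Small.{w} (R ⧸ Ideal.span {p}) := hP ▸ ‹_›
  exact small_of_iInf_span_singleton_pow_eq_bot (hP ▸
    Ideal.iInf_pow_eq_bot_of_isLocalRing _ (IsLocalRing.maximalIdeal.isMaximal R).ne_top)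

theorem Module.Injective.exists_smul_eq {R : Type*} {M : Type w} [Ring R] [Small.{w} R]
    [AddCommGroup M] [Module R M] [Module.Injective R M] {a : R} (ha : IsRightRegular a) (x : M) :
    ∃ y : M, a • y = x := by
  obtain ⟨h, hh⟩ := Module.Injective.extension_property R M R R
    (LinearMap.toSpanSingleton R R a) ha (LinearMap.toSpanSingleton R M x)
  exact ⟨h 1, by simpa [← map_smul] using LinearMap.congr_fun hh 1⟩

theorem Ideal.IsPrime.isTwoAbsPrimary {R : Type*} [CommRing R] {I : Ideal R} (hI : I.IsPrime) :
    IsTwoAbsPrimary I := by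
  refine ⟨hI.ne_top, fun a b c habc ↦ ?_⟩
  rcases hI.mem_or_mem habc with hab | hc
  · exact .inl hab
  · exact .inr (.inl (I.le_radical (I.mul_mem_left a hc)))

theorem Submodule.le_colon_smul_top {R M : Type*} [CommRing R] [AddCommGroup M] [Module R M]
    (I : Ideal R) : I ≤ (I • (⊤ : Submodule R M)).colon ⊤ :=
  fun _ hr ↦ Submodule.mem_colon.mpr fun _ _ ↦ Submodule.smul_mem_smul hr Submodule.mem_top

theorem not_isPAPMultiplication_of_colon_eq_bot {R M : Type*} [CommRing R] [IsDomain R]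
    [AddCommGroup M] [Module R M] {N : Submodule R M} (hN : N ≠ ⊥) (hcolon : N.colon ⊤ = ⊥) :
    ¬ IsPAPMultiplication R M := by
  intro hPAP
  have hNtop : N ≠ ⊤ := fun h ↦ by simp [h] at hcolon
  obtain ⟨I, rfl⟩ := hPAP N ⟨hNtop, hcolon ▸ Ideal.isPrime_bot.isTwoAbsPrimary⟩
  have : I = ⊥ := eq_bot_iff.mpr (hcolon ▸ Submodule.le_colon_smul_top I)
  exact hN (by rw [this, Submodule.bot_smul])

theorem colon_ker_smul_eq_bot_of_divisible {R M : Type*} [CommRing R] [IsDomain R]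
    [AddCommGroup M] [Module R M] [Nontrivial M]
    (hdiv : ∀ a : R, a ≠ 0 → ∀ x : M, ∃ y, a • y = x) {p : R} (hp : p ≠ 0) :
    (LinearMap.ker (p • LinearMap.id : M →ₗ[R] M)).colon ⊤ = ⊥ := by
  refine eq_bot_iff.mpr fun r hr ↦ (Submodule.mem_bot R).mpr (by_contra fun hr0 ↦ ?_)
  obtain ⟨x, hx⟩ := exists_ne (0 : M)
  obtain ⟨y, rfl⟩ := hdiv (p * r) (mul_ne_zero hp hr0) x
  have : p • r • y = 0 := Submodule.mem_colon.mp hr y trivial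
  exact hx (by rwa [mul_smul])

theorem stmt_6_general {R E : Type*} [CommRing R] [IsDomain R] [IsDiscreteValuationRing R]
    [AddCommGroup E] [Module R E]
    (hinj : Module.Injective R E)
    (ι : (R ⧸ IsLocalRing.maximalIdeal R) →ₗ[R] E) (hι : Function.Injective ι) :
    ¬ IsPAPMultiplication R E := by
  have : Small.{u_2} (R ⧸ IsLocalRing.maximalIdeal R) := small_of_injective hι
  have := IsDiscreteValuationRing.small_of_small_residue.{u_2} (R := R)
  obtain ⟨p, hp⟩ := IsDiscreteValuationRing.exists_irreducible R
  have he₀ : ι 1 ≠ 0 := by simp [map_eq_zero_iff ι hι]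
  have hpe₀ : p • ι 1 = 0 := by
    rw [← map_smul, Algebra.smul_def, mul_one, Ideal.Quotient.algebraMap_eq,
      Ideal.Quotient.eq_zero_iff_mem.mpr ((IsLocalRing.mem_maximalIdeal p).mpr hp.not_isUnit),
      map_zero]
  refine not_isPAPMultiplication_of_colon_eq_bot (N := LinearMap.ker (p • LinearMap.id)) ?_ ?_
  · exact Submodule.ne_bot_iff _ |>.mpr ⟨ι 1, hpe₀, he₀⟩
  · have : Nontrivial E := ⟨_, _, he₀⟩
    exact colon_ker_smul_eq_bot_of_divisible
      (fun a ha ↦ Module.Injective.exists_smul_eq (IsRegular.of_ne_zero ha).right) hp.ne_zero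

/-- For a DVR R with maximal ideal P, the injective hull E(R/P) of R/P (an
injective module containing R/P as an essential submodule) is not a
pseudo-absorbing primary multiplication module. -/
theorem stmt_6 {R E : Type*} [CommRing R] [IsDomain R] [IsDiscreteValuationRing R]
    [AddCommGroup E] [Module R E]
    (hinj : Module.Injective R E)
    (ι : (R ⧸ IsLocalRing.maximalIdeal R) →ₗ[R] E) (hι : Function.Injective ι)
    (hess : ∀ N : Submodule R E, N ≠ ⊥ → N ⊓ LinearMap.range ι ≠ ⊥) :
    ¬ IsPAPMultiplication R E :=
  stmt_6_general hinj ι hι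
end

section
/- Let R be the pullback of two DVRs over a common residue field, let 0 → K → S → M → 0 be a separated representation of a non-separated R-module M. Then M is a pseudo-absorbing primary multiplication R-module if and only if S is a pseudo-absorbing primary multiplication R-module. -/
/-- The pullback ring `R = {(r,s) : v₁ r = v₂ s}` of two rings over a common quotient. -/
def pullbackRing {R₁ R₂ k : Type*} [CommRing R₁] [CommRing R₂] [CommRing k]
    (v₁ : R₁ →+* k) (v₂ : R₂ →+* k) : Subring (R₁ × R₂) :=
  RingHom.eqLocus (v₁.comp (RingHom.fst R₁ R₂)) (v₂.comp (RingHom.snd R₁ R₂))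

/-- The ideal `I ⊕ J` of the pullback ring, i.e. the trace on the pullback of the
product ideal `I × J` of `R₁ × R₂`. -/
def pbIdeal {R₁ R₂ k : Type*} [CommRing R₁] [CommRing R₂] [CommRing k]
    (v₁ : R₁ →+* k) (v₂ : R₂ →+* k) (I : Ideal R₁) (J : Ideal R₂) :
    Ideal (pullbackRing v₁ v₂) :=
  Ideal.comap (pullbackRing v₁ v₂).subtype (I.prod J)

open IsLocalRing Submodule

section TwoAbsPrimary

variable {R : Type*} [CommRing R]

theorem IsTwoAbsPrimary.of_isPrime_radical {I : Ideal R} (hI : I ≠ ⊤) (hrad : I.radical.IsPrime) :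
    IsTwoAbsPrimary I := by
  refine ⟨hI, fun a b c habc => ?_⟩
  rcases hrad.mem_or_mem (Ideal.le_radical habc) with hab | hc
  · rcases hrad.mem_or_mem hab with ha | hb
    · exact Or.inr (Or.inl (Ideal.mul_mem_right c _ ha))
    · exact Or.inr (Or.inr (Ideal.mul_mem_right c _ hb))
  · exact Or.inr (Or.inl (Ideal.mul_mem_left _ a hc))

theorem IsTwoAbsPrimary.inf {p q : Ideal R} [hp : p.IsPrime] [hq : q.IsPrime] :
    IsTwoAbsPrimary (p ⊓ q) := by
  refine ⟨fun h => hp.ne_top (eq_top_iff.2 (h ▸ inf_le_left)), fun a b c habc => ?_⟩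
  rw [Ideal.radical_inf, hp.radical, hq.radical]
  simp only [Ideal.mem_inf, hp.mul_mem_iff_mem_or_mem, hq.mul_mem_iff_mem_or_mem] at habc ⊢
  tauto

end TwoAbsPrimary

def IsMultiplicationModule (R M : Type*) [CommRing R] [AddCommGroup M] [Module R M] : Prop :=
  ∀ N : Submodule R M, ∃ I : Ideal R, N = I • (⊤ : Submodule R M)

namespace IsMultiplicationModule

variable {R M M' : Type*} [CommRing R] [AddCommGroup M] [Module R M] [AddCommGroup M'] [Module R M']

theorem of_isPrincipal_top [h : (⊤ : Submodule R M).IsPrincipal] : IsMultiplicationModule R M := by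
  obtain ⟨m, hm⟩ := h.principal
  have hspan (x : M) : ∃ r : R, r • m = x := mem_span_singleton.1 (hm ▸ mem_top)
  refine fun N => ⟨N.colon {m}, le_antisymm (fun x hx => ?_) (smul_le.2 fun r hr x _ => ?_)⟩
  · obtain ⟨r, rfl⟩ := hspan x
    exact smul_mem_smul (mem_colon_singleton.2 hx) mem_top
  · obtain ⟨c, rfl⟩ := hspan x
    rw [smul_comm]
    exact N.smul_mem c (mem_colon_singleton.1 hr)

theorem of_surjective (h : IsMultiplicationModule R M) (f : M →ₗ[R] M')
    (hf : Function.Surjective f) : IsMultiplicationModule R M' := by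
  intro N
  obtain ⟨I, hI⟩ := h (N.comap f)
  refine ⟨I, ?_⟩
  rw [← Submodule.map_comap_eq_of_surjective hf N, hI, Submodule.map_smul'', Submodule.map_top,
    LinearMap.range_eq_top.2 hf]

theorem isPrincipal_top [IsLocalRing R] (h : IsMultiplicationModule R M)
    (hM : maximalIdeal R • (⊤ : Submodule R M) ≠ ⊤) : (⊤ : Submodule R M).IsPrincipal := by
  obtain ⟨m, -, hm⟩ := SetLike.exists_of_lt (lt_top_iff_ne_top.2 hM)
  obtain ⟨I, hI⟩ := h (R ∙ m)
  refine ⟨m, ?_⟩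
  by_contra hne
  have hI' : I ≠ ⊤ := by rintro rfl; exact hne (hI.trans (top_smul _)).symm
  exact hm (smul_mono_left (le_maximalIdeal hI') (hI ▸ mem_span_singleton_self m))

theorem smul_top_sup_smul_top_ne_top {P₁ P₂ : Ideal R}
    (hP : P₁ * P₂ = ⊥) (hP₁ : P₁ ≤ Ideal.jacobson ⊥)
    (hpow : ∀ J : Ideal R, ¬J ≤ P₂ → ∃ n, P₁ ^ n ≤ J)
    (hM : IsMultiplicationModule R M) (hP₁M : P₁ • (⊤ : Submodule R M) ≠ ⊥) :
    P₁ • (⊤ : Submodule R M) ⊔ P₂ • ⊤ ≠ ⊤ := by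
  set A := P₁ • (⊤ : Submodule R M)
  set B := P₂ • (⊤ : Submodule R M)
  intro hAB
  have hP₁B : P₁ • B = ⊥ := by rw [← Submodule.mul_smul, hP, bot_smul]
  have hA (N : Submodule R M) : P₁ • (N ⊔ B) = P₁ • N := by rw [smul_sup, hP₁B, sup_bot_eq]
  have hAA : P₁ • A = A := by rw [← hA, hAB]
  have hApow (n : ℕ) : A ≤ P₁ ^ n • ⊤ := by
    induction n with
    | zero => simp
    | succ n ih =>
      calc A = P₁ • A := hAA.symm
        _ ≤ P₁ • (P₁ ^ n • ⊤) := smul_mono_right _ ih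
        _ = P₁ ^ (n + 1) • ⊤ := by rw [pow_succ', Submodule.mul_smul]
  obtain ⟨a, haB⟩ : ∃ a, a ∉ B := by
    by_contra! hB
    exact hP₁M (by rw [← hP₁B, show B = ⊤ from eq_top_iff.2 fun x _ => hB x])
  -- `R ∙ a ⊔ B` is a submodule `J • M`; `a ∉ B` forces `J ⊄ P₂`, hence `J • M ⊇ A`.
  have hspan : (R ∙ a) ⊔ B = ⊤ := by
    obtain ⟨J, hJ⟩ := hM ((R ∙ a) ⊔ B)
    by_cases hJ₂ : J ≤ P₂
    · exact absurd (smul_mono_left hJ₂ (hJ ▸ mem_sup_left (mem_span_singleton_self a))) haB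
    obtain ⟨n, hn⟩ := hpow J hJ₂
    refine top_unique (hAB ▸ sup_le ?_ le_sup_right)
    rw [hJ]
    exact (hApow n).trans (smul_mono_left hn)
  have haB' : R ∙ a ≤ B := by
    refine le_of_le_smul_of_le_jacobson_bot (fg_span_singleton a) hP₁ ?_
    rw [sup_comm, ← hA, hspan]
    exact le_top.trans hAB.ge
  exact haB (haB' (mem_span_singleton_self a))

end IsMultiplicationModule

section Multiplication

variable {R M M' : Type*} [CommRing R] [AddCommGroup M] [Module R M] [AddCommGroup M'] [Module R M']

theorem isPAPMultiplication_iff_isMultiplicationModule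
    (hR : ∀ I : Ideal R, I ≠ ⊤ → IsTwoAbsPrimary I) :
    IsPAPMultiplication R M ↔ IsMultiplicationModule R M := by
  refine ⟨fun h N => ?_, fun h N _ => h N⟩
  by_cases hN : N = ⊤
  · exact ⟨⊤, hN.trans (top_smul _).symm⟩
  refine h N ⟨hN, hR _ fun htop => hN ?_⟩
  rw [colon_eq_top_iff_subset] at htop
  exact eq_top_iff.2 fun x _ => htop trivial

theorem isPrincipal_top_of_surjective {I : Ideal R} (f : M →ₗ[R] M') (hf : Function.Surjective f)
    [h : (⊤ : Submodule R M').IsPrincipal] (hK : LinearMap.ker f ≤ I • ⊤)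
    (hIK : I • LinearMap.ker f = ⊥) : (⊤ : Submodule R M).IsPrincipal := by
  obtain ⟨m', hm'⟩ := h.principal
  obtain ⟨m, rfl⟩ := hf m'
  have hsup : ⊤ ≤ (R ∙ m) ⊔ LinearMap.ker f := by
    rw [← comap_map_eq, map_span, Set.image_singleton, ← hm', comap_top]
  have hker : LinearMap.ker f ≤ R ∙ m :=
    calc LinearMap.ker f ≤ I • ((R ∙ m) ⊔ LinearMap.ker f) := hK.trans (smul_mono_right _ hsup)
      _ = I • (R ∙ m) := by rw [smul_sup, hIK, sup_bot_eq]
      _ ≤ R ∙ m := smul_le_right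
  exact ⟨m, top_le_iff.1 (hsup.trans (sup_le le_rfl hker)) |>.symm⟩

end Multiplication

theorem IsDiscreteValuationRing.exists_maximalIdeal_pow_le_span_singleton_mul {D : Type*}
    [CommRing D] [IsDomain D] [IsDiscreteValuationRing D] {d : D} (hd : d ≠ 0) :
    ∃ n, IsLocalRing.maximalIdeal D ^ n ≤ Ideal.span {d} * IsLocalRing.maximalIdeal D := by
  obtain ⟨ϖ, hϖ⟩ := exists_irreducible D
  obtain ⟨n, u, rfl⟩ := eq_unit_mul_pow_irreducible hd hϖ
  refine ⟨n + 1, le_of_eq ?_⟩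
  rw [hϖ.maximalIdeal_eq, Ideal.span_singleton_pow, Ideal.span_singleton_mul_span_singleton,
    mul_assoc, Ideal.span_singleton_mul_left_unit u.isUnit, pow_succ]

theorem isLocalHom_of_ker_eq_maximalIdeal {A B : Type*} [CommRing A] [IsLocalRing A] [Semiring B]
    [Nontrivial B] {f : A →+* B} (hf : RingHom.ker f = maximalIdeal A) : IsLocalHom f where
  map_nonunit a ha := by
    by_contra h
    exact ha.ne_zero (RingHom.mem_ker.1 (hf ▸ (mem_maximalIdeal a).2 h))

section Pullback

variable {R₁ R₂ k : Type*} [CommRing R₁] [CommRing R₂] [CommRing k] {v₁ : R₁ →+* k} {v₂ : R₂ →+* k}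

theorem pullbackRing_comm (x : pullbackRing v₁ v₂) : v₁ (x : R₁ × R₂).1 = v₂ (x : R₁ × R₂).2 :=
  x.2

theorem mem_pbIdeal {I : Ideal R₁} {J : Ideal R₂} {x : pullbackRing v₁ v₂} :
    x ∈ pbIdeal v₁ v₂ I J ↔ (x : R₁ × R₂).1 ∈ I ∧ (x : R₁ × R₂).2 ∈ J :=
  Iff.rfl

theorem pbIdeal_mul_pbIdeal_eq_bot (I : Ideal R₁) (J : Ideal R₂) :
    pbIdeal v₁ v₂ I ⊥ * pbIdeal v₁ v₂ ⊥ J = ⊥ := by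
  refine le_bot_iff.1 (Ideal.mul_le.2 fun x hx y hy => ?_)
  simp only [mem_pbIdeal, Ideal.mem_bot] at hx hy ⊢
  exact Subtype.ext (Prod.ext (by simp [hy.1]) (by simp [hx.2]))

theorem pbIdeal_inf_pbIdeal_eq_bot (I : Ideal R₁) (J : Ideal R₂) :
    pbIdeal v₁ v₂ I ⊥ ⊓ pbIdeal v₁ v₂ ⊥ J = ⊥ := by
  refine le_bot_iff.1 fun x hx => ?_
  simp only [Ideal.mem_inf, mem_pbIdeal, Ideal.mem_bot] at hx ⊢
  exact Subtype.ext (Prod.ext hx.2.1 hx.1.2)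

theorem pbIdeal_pow_le (I : Ideal R₁) (J : Ideal R₂) (n : ℕ) :
    pbIdeal v₁ v₂ I J ^ n ≤ pbIdeal v₁ v₂ (I ^ n) (J ^ n) := by
  induction n with
  | zero =>
    simp only [pow_zero, Ideal.one_eq_top]
    exact fun _ _ => ⟨trivial, trivial⟩
  | succ n ih =>
    refine Ideal.mul_le.2 fun x hx y hy => ?_
    simp only [pow_succ]
    exact ⟨Ideal.mul_mem_mul (ih hx).1 hy.1, Ideal.mul_mem_mul (ih hx).2 hy.2⟩

theorem mem_pbIdeal_maximalIdeal_bot [IsLocalRing R₁] (hk₁ : RingHom.ker v₁ = maximalIdeal R₁)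
    {x : pullbackRing v₁ v₂} :
    x ∈ pbIdeal v₁ v₂ (maximalIdeal R₁) ⊥ ↔ (x : R₁ × R₂).2 = 0 := by
  rw [mem_pbIdeal, ← hk₁, RingHom.mem_ker, Ideal.mem_bot]
  exact ⟨And.right, fun h => ⟨by rw [pullbackRing_comm, h, map_zero], h⟩⟩

theorem mem_pbIdeal_bot_maximalIdeal [IsLocalRing R₂] (hk₂ : RingHom.ker v₂ = maximalIdeal R₂)
    {x : pullbackRing v₁ v₂} :
    x ∈ pbIdeal v₁ v₂ ⊥ (maximalIdeal R₂) ↔ (x : R₁ × R₂).1 = 0 := by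
  rw [mem_pbIdeal, ← hk₂, RingHom.mem_ker, Ideal.mem_bot]
  exact ⟨And.left, fun h => ⟨h, by rw [← pullbackRing_comm, h, map_zero]⟩⟩

theorem isLocalRing_pullbackRing [IsLocalRing R₁] [IsLocalRing R₂] [Nontrivial k]
    (hk₂ : RingHom.ker v₂ = maximalIdeal R₂) : IsLocalRing (pullbackRing v₁ v₂) :=
  have := isLocalHom_of_ker_eq_maximalIdeal hk₂
  RingHom.isLocalRing_pullback v₁ v₂

theorem maximalIdeal_pullbackRing [IsLocalRing R₁] [IsLocalRing R₂]
    [IsLocalRing (pullbackRing v₁ v₂)]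
    (hk₁ : RingHom.ker v₁ = maximalIdeal R₁) (hk₂ : RingHom.ker v₂ = maximalIdeal R₂) :
    maximalIdeal (pullbackRing v₁ v₂) =
      pbIdeal v₁ v₂ (maximalIdeal R₁) ⊥ ⊔ pbIdeal v₁ v₂ ⊥ (maximalIdeal R₂) := by
  refine le_antisymm (fun x hx => ?_) (sup_le (le_maximalIdeal ?_) (le_maximalIdeal ?_))
  · obtain ⟨⟨x₁, x₂⟩, hx₁₂⟩ := x
    have h₁ : v₁ x₁ = 0 := by
      by_contra h₁
      have h₂ : ¬v₂ x₂ = 0 := hx₁₂ ▸ h₁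
      rw [← RingHom.mem_ker, hk₁, notMem_maximalIdeal] at h₁
      rw [← RingHom.mem_ker, hk₂, notMem_maximalIdeal] at h₂
      exact (mem_maximalIdeal _).1 hx ((RingHom.isUnit_pullback_mk_iff v₁ v₂ hx₁₂).2 ⟨h₁, h₂⟩)
    have h₂ : v₂ x₂ = 0 := (show v₁ x₁ = v₂ x₂ from hx₁₂) ▸ h₁
    refine Submodule.mem_sup.2 ⟨⟨(x₁, 0), show v₁ x₁ = v₂ 0 by rw [h₁, map_zero]⟩,
      (mem_pbIdeal_maximalIdeal_bot hk₁).2 rfl, ⟨(0, x₂), show v₁ 0 = v₂ x₂ by rw [h₂, map_zero]⟩,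
      (mem_pbIdeal_bot_maximalIdeal hk₂).2 rfl, Subtype.ext (Prod.ext (add_zero x₁) (zero_add x₂))⟩
  · rw [Ideal.ne_top_iff_one, mem_pbIdeal_maximalIdeal_bot hk₁]
    exact one_ne_zero
  · rw [Ideal.ne_top_iff_one, mem_pbIdeal_bot_maximalIdeal hk₂]
    exact one_ne_zero

theorem isPrime_pbIdeal_maximalIdeal_bot [IsLocalRing R₁] [IsDomain R₂]
    (hk₁ : RingHom.ker v₁ = maximalIdeal R₁) : (pbIdeal v₁ v₂ (maximalIdeal R₁) ⊥).IsPrime := by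
  rw [show pbIdeal v₁ v₂ (maximalIdeal R₁) ⊥ =
    RingHom.ker ((RingHom.snd R₁ R₂).comp (pullbackRing v₁ v₂).subtype) from
      Ideal.ext fun _ => mem_pbIdeal_maximalIdeal_bot hk₁]
  exact RingHom.ker_isPrime _

theorem isPrime_pbIdeal_bot_maximalIdeal [IsDomain R₁] [IsLocalRing R₂]
    (hk₂ : RingHom.ker v₂ = maximalIdeal R₂) : (pbIdeal v₁ v₂ ⊥ (maximalIdeal R₂)).IsPrime := by
  rw [show pbIdeal v₁ v₂ ⊥ (maximalIdeal R₂) =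
    RingHom.ker ((RingHom.fst R₁ R₂).comp (pullbackRing v₁ v₂).subtype) from
      Ideal.ext fun _ => mem_pbIdeal_bot_maximalIdeal hk₂]
  exact RingHom.ker_isPrime _

theorem exists_pbIdeal_maximalIdeal_bot_pow_le [IsDomain R₁] [IsDiscreteValuationRing R₁]
    [IsLocalRing R₂] (hk₁ : RingHom.ker v₁ = maximalIdeal R₁)
    (hk₂ : RingHom.ker v₂ = maximalIdeal R₂) {J : Ideal (pullbackRing v₁ v₂)}
    (hJ : ¬J ≤ pbIdeal v₁ v₂ ⊥ (maximalIdeal R₂)) :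
    ∃ n, pbIdeal v₁ v₂ (maximalIdeal R₁) ⊥ ^ n ≤ J := by
  obtain ⟨z, hzJ, hz⟩ := SetLike.not_le_iff_exists.1 hJ
  rw [mem_pbIdeal_bot_maximalIdeal hk₂] at hz
  obtain ⟨n, hn⟩ := IsDiscreteValuationRing.exists_maximalIdeal_pow_le_span_singleton_mul hz
  refine ⟨n + 1, fun x hx => ?_⟩
  have hx₁ := (pbIdeal_pow_le _ _ n (Ideal.pow_le_pow_right n.le_succ hx)).1
  have hx₂ := (mem_pbIdeal_maximalIdeal_bot hk₁).1 (Ideal.pow_le_self n.succ_ne_zero hx)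
  obtain ⟨c, hc, hcx⟩ := Ideal.mem_span_singleton_mul.1 (hn hx₁)
  have hc' : v₁ c = v₂ 0 := by rw [map_zero, ← RingHom.mem_ker, hk₁]; exact hc
  have hx : ⟨(c, 0), hc'⟩ * z = x :=
    Subtype.ext (Prod.ext ((mul_comm _ _).trans hcx) (by simp [hx₂]))
  exact hx ▸ J.mul_mem_left _ hzJ

theorem exists_pbIdeal_bot_maximalIdeal_pow_le [IsLocalRing R₁] [IsDomain R₂]
    [IsDiscreteValuationRing R₂] (hk₁ : RingHom.ker v₁ = maximalIdeal R₁)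
    (hk₂ : RingHom.ker v₂ = maximalIdeal R₂) {J : Ideal (pullbackRing v₁ v₂)}
    (hJ : ¬J ≤ pbIdeal v₁ v₂ (maximalIdeal R₁) ⊥) :
    ∃ n, pbIdeal v₁ v₂ ⊥ (maximalIdeal R₂) ^ n ≤ J := by
  obtain ⟨z, hzJ, hz⟩ := SetLike.not_le_iff_exists.1 hJ
  rw [mem_pbIdeal_maximalIdeal_bot hk₁] at hz
  obtain ⟨n, hn⟩ := IsDiscreteValuationRing.exists_maximalIdeal_pow_le_span_singleton_mul hz
  refine ⟨n + 1, fun x hx => ?_⟩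
  have hx₂ := (pbIdeal_pow_le _ _ n (Ideal.pow_le_pow_right n.le_succ hx)).2
  have hx₁ := (mem_pbIdeal_bot_maximalIdeal hk₂).1 (Ideal.pow_le_self n.succ_ne_zero hx)
  obtain ⟨c, hc, hcx⟩ := Ideal.mem_span_singleton_mul.1 (hn hx₂)
  have hc' : v₁ 0 = v₂ c := by rw [map_zero, eq_comm, ← RingHom.mem_ker, hk₂]; exact hc
  have hx : ⟨(0, c), hc'⟩ * z = x :=
    Subtype.ext (Prod.ext (by simp [hx₁]) ((mul_comm _ _).trans hcx))
  exact hx ▸ J.mul_mem_left _ hzJ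

theorem isTwoAbsPrimary_pullbackRing [Nontrivial k] [IsDomain R₁] [IsDiscreteValuationRing R₁]
    [IsDomain R₂] [IsDiscreteValuationRing R₂] (hk₁ : RingHom.ker v₁ = maximalIdeal R₁)
    (hk₂ : RingHom.ker v₂ = maximalIdeal R₂) {I : Ideal (pullbackRing v₁ v₂)} (hI : I ≠ ⊤) :
    IsTwoAbsPrimary I := by
  have := isLocalRing_pullbackRing (v₁ := v₁) hk₂
  have hP₁ := isPrime_pbIdeal_maximalIdeal_bot (v₂ := v₂) hk₁
  have hP₂ := isPrime_pbIdeal_bot_maximalIdeal (v₁ := v₁) hk₂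
  have le_radical_of_pow_le {P : Ideal (pullbackRing v₁ v₂)} : (∃ n, P ^ n ≤ I) → P ≤ I.radical :=
    fun ⟨n, hn⟩ x hx => ⟨n, hn (Ideal.pow_mem_pow hx n)⟩
  by_cases h₂ : I ≤ pbIdeal v₁ v₂ ⊥ (maximalIdeal R₂) <;>
    by_cases h₁ : I ≤ pbIdeal v₁ v₂ (maximalIdeal R₁) ⊥
  · rw [le_antisymm (le_inf h₁ h₂) ((pbIdeal_inf_pbIdeal_eq_bot _ _).le.trans bot_le)]
    exact IsTwoAbsPrimary.inf
  · refine .of_isPrime_radical hI ?_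
    rwa [le_antisymm (hP₂.radical_le_iff.2 h₂)
      (le_radical_of_pow_le (exists_pbIdeal_bot_maximalIdeal_pow_le hk₁ hk₂ h₁))]
  · refine .of_isPrime_radical hI ?_
    rwa [le_antisymm (hP₁.radical_le_iff.2 h₁)
      (le_radical_of_pow_le (exists_pbIdeal_maximalIdeal_bot_pow_le hk₁ hk₂ h₂))]
  · refine .of_isPrime_radical hI ?_
    rw [le_antisymm (le_maximalIdeal (Ideal.radical_eq_top.not.2 hI))
      (maximalIdeal_pullbackRing hk₁ hk₂ ▸ sup_le
        (le_radical_of_pow_le (exists_pbIdeal_maximalIdeal_bot_pow_le hk₁ hk₂ h₂))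
        (le_radical_of_pow_le (exists_pbIdeal_bot_maximalIdeal_pow_le hk₁ hk₂ h₁)))]
    exact (maximalIdeal.isMaximal _).isPrime

end Pullback

theorem stmt_17_general {R₁ R₂ k : Type*} [CommRing R₁] [CommRing R₂] [Field k]
    [IsDomain R₁] [IsDomain R₂] [IsDiscreteValuationRing R₁] [IsDiscreteValuationRing R₂]
    (v₁ : R₁ →+* k) (v₂ : R₂ →+* k)
    (hk₁ : RingHom.ker v₁ = IsLocalRing.maximalIdeal R₁)
    (hk₂ : RingHom.ker v₂ = IsLocalRing.maximalIdeal R₂)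
    {S M : Type*} [AddCommGroup S] [Module (pullbackRing v₁ v₂) S]
    [AddCommGroup M] [Module (pullbackRing v₁ v₂) M]
    (φ : S →ₗ[pullbackRing v₁ v₂] M) (hφ : Function.Surjective φ)
    -- K ⊆ PS
    (hKP : LinearMap.ker φ ≤
      pbIdeal v₁ v₂ (IsLocalRing.maximalIdeal R₁) (IsLocalRing.maximalIdeal R₂) •
        (⊤ : Submodule (pullbackRing v₁ v₂) S))
    -- PK = 0
    (hPK : pbIdeal v₁ v₂ (IsLocalRing.maximalIdeal R₁) (IsLocalRing.maximalIdeal R₂) •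
        LinearMap.ker φ = ⊥)
    -- M is non-separated: P₁M ∩ P₂M ≠ 0
    (hns : (pbIdeal v₁ v₂ (IsLocalRing.maximalIdeal R₁) ⊥ •
        (⊤ : Submodule (pullbackRing v₁ v₂) M)) ⊓
      (pbIdeal v₁ v₂ ⊥ (IsLocalRing.maximalIdeal R₂) • ⊤) ≠ ⊥) :
    IsPAPMultiplication (pullbackRing v₁ v₂) M ↔
      IsPAPMultiplication (pullbackRing v₁ v₂) S := by
  have := isLocalRing_pullbackRing (v₁ := v₁) hk₂
  have hR (I : Ideal (pullbackRing v₁ v₂)) := isTwoAbsPrimary_pullbackRing (I := I) hk₁ hk₂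
  rw [isPAPMultiplication_iff_isMultiplicationModule hR,
    isPAPMultiplication_iff_isMultiplicationModule hR]
  refine ⟨fun hM => ?_, fun hS => hS.of_surjective φ hφ⟩
  have hmax := maximalIdeal_pullbackRing hk₁ hk₂
  have : (⊤ : Submodule _ M).IsPrincipal := hM.isPrincipal_top <| by
    rw [hmax, sup_smul]
    exact hM.smul_top_sup_smul_top_ne_top (pbIdeal_mul_pbIdeal_eq_bot _ _)
      ((hmax ▸ le_sup_left).trans (maximalIdeal_le_jacobson ⊥))
      (fun _ => exists_pbIdeal_maximalIdeal_bot_pow_le hk₁ hk₂)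
      (fun h => hns (by rw [h, bot_inf_eq]))
  have := isPrincipal_top_of_surjective φ hφ hKP hPK
  exact .of_isPrincipal_top

/-- Over the pullback R of two DVRs over their common residue field, if
0 → K → S →^φ M → 0 is a separated representation of a non-separated module M,
then M is a pseudo-absorbing primary multiplication R-module iff S is. -/
theorem stmt_17 {R₁ R₂ k : Type*} [CommRing R₁] [CommRing R₂] [Field k]
    [IsDomain R₁] [IsDomain R₂] [IsDiscreteValuationRing R₁] [IsDiscreteValuationRing R₂]
    (v₁ : R₁ →+* k) (v₂ : R₂ →+* k)
    (hv₁ : Function.Surjective v₁) (hv₂ : Function.Surjective v₂)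
    (hk₁ : RingHom.ker v₁ = IsLocalRing.maximalIdeal R₁)
    (hk₂ : RingHom.ker v₂ = IsLocalRing.maximalIdeal R₂)
    {S M : Type*} [AddCommGroup S] [Module (pullbackRing v₁ v₂) S]
    [AddCommGroup M] [Module (pullbackRing v₁ v₂) M]
    (φ : S →ₗ[pullbackRing v₁ v₂] M) (hφ : Function.Surjective φ)
    -- S is separated: P₁S ∩ P₂S = 0
    (hsep : (pbIdeal v₁ v₂ (IsLocalRing.maximalIdeal R₁) ⊥ •
        (⊤ : Submodule (pullbackRing v₁ v₂) S)) ⊓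
      (pbIdeal v₁ v₂ ⊥ (IsLocalRing.maximalIdeal R₂) • ⊤) = ⊥)
    -- K ⊆ PS
    (hKP : LinearMap.ker φ ≤
      pbIdeal v₁ v₂ (IsLocalRing.maximalIdeal R₁) (IsLocalRing.maximalIdeal R₂) •
        (⊤ : Submodule (pullbackRing v₁ v₂) S))
    -- PK = 0
    (hPK : pbIdeal v₁ v₂ (IsLocalRing.maximalIdeal R₁) (IsLocalRing.maximalIdeal R₂) •
        LinearMap.ker φ = ⊥)
    -- PᵢS ∩ K = 0 for i = 1, 2
    (hK1 : (pbIdeal v₁ v₂ (IsLocalRing.maximalIdeal R₁) ⊥ •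
        (⊤ : Submodule (pullbackRing v₁ v₂) S)) ⊓ LinearMap.ker φ = ⊥)
    (hK2 : (pbIdeal v₁ v₂ ⊥ (IsLocalRing.maximalIdeal R₂) •
        (⊤ : Submodule (pullbackRing v₁ v₂) S)) ⊓ LinearMap.ker φ = ⊥)
    -- M is non-separated: P₁M ∩ P₂M ≠ 0
    (hns : (pbIdeal v₁ v₂ (IsLocalRing.maximalIdeal R₁) ⊥ •
        (⊤ : Submodule (pullbackRing v₁ v₂) M)) ⊓
      (pbIdeal v₁ v₂ ⊥ (IsLocalRing.maximalIdeal R₂) • ⊤) ≠ ⊥) :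
    IsPAPMultiplication (pullbackRing v₁ v₂) M ↔
      IsPAPMultiplication (pullbackRing v₁ v₂) S :=
  stmt_17_general v₁ v₂ hk₁ hk₂ φ hφ hKP hPK hns
end
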